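/- arXiv:1303.4875 — 8 statements merged into one kernel-verified Lean document; each statement's English description precedes it below -/
import Mathlib

section
/- Let X be a centered, square-integrable random vector in ℝ^k with covariance matrix K = E[X Xᵀ], let Y be a centered, square-integrable real random variable, and let κ = E[X Y]. Let Θ ⊆ ℝ^p be open, and let φ: Θ → ℝ^k and v: Θ → ℝ be differentiable at a point θ₀ ∈ Θ at which K φ(θ₀) = κ (so that φ(θ₀)ᵀX is the minimum mean squared error linear predictor). Define, for θ ∈ Θ, the ℝ^{k+1}-valued function h(θ) = E[H(θ)] where H(θ) = (X (Y − φ(θ)ᵀX), (Y − φ(θ)ᵀX)² − v(θ)). Then h is differentiable at θ₀ and its derivative (Jacobian, a (k+1)×p matrix) at θ₀ equals −(K Dφ(θ₀) ; Dv(θ₀)), i.e., its first k rows are −K times the Jacobian of φ at θ₀ and its last row is minus the gradient of v at θ₀. (This identifies the sensitivity matrix S(θ₀)ᵀ = E[∂_{θᵀ} H(θ₀)] of the prediction-based estimating function.) -/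
open MeasureTheory Matrix

/-!
Both components of `h` are explicit in `φ θ`. The first is affine: `E[X (Y - aᵀX)] = κ - K a`.
For the second, since `b = φ θ₀` solves the normal equations `K b = κ`, Pythagoras gives
`E[(Y - aᵀX)²] = E[(Y - bᵀX)²] + (a - b)ᵀ K (a - b)`, and the quadratic term vanishes to
second order at `θ₀`. Hence the derivative is `-K Dφ` in the first component and `-Dv` in the
second.
-/

section Moments

variable {Ω ι : Type*} [MeasurableSpace Ω] [Fintype ι] {μ : Measure Ω}
  {X : Ω → ι → ℝ} {Y Z : Ω → ℝ}

noncomputable def momentMatrix (μ : Measure Ω) (X : Ω → ι → ℝ) : Matrix ι ι ℝ :=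
  Matrix.of fun i j => ∫ ω, X ω i * X ω j ∂μ

noncomputable def crossMoment (μ : Measure Ω) (X : Ω → ι → ℝ) (Y : Ω → ℝ) : ι → ℝ :=
  fun i => ∫ ω, X ω i * Y ω ∂μ

theorem memLp_dotProduct {p : ENNReal} (hX : ∀ i, MemLp (fun ω => X ω i) p μ) (c : ι → ℝ) :
    MemLp (fun ω => c ⬝ᵥ X ω) p μ :=
  memLp_finsetSum _ fun i _ => (hX i).const_mul (c i)

theorem integral_dotProduct_mul (hXZ : ∀ i, Integrable (fun ω => X ω i * Z ω) μ)
    (c : ι → ℝ) :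
    ∫ ω, (c ⬝ᵥ X ω) * Z ω ∂μ = c ⬝ᵥ fun i => ∫ ω, X ω i * Z ω ∂μ := by
  simp only [dotProduct, Finset.sum_mul, mul_assoc]
  rw [integral_finsetSum _ fun i _ => (hXZ i).const_mul (c i)]
  simp only [integral_const_mul]

theorem momentMatrix_mulVec (hX : ∀ i, MemLp (fun ω => X ω i) 2 μ) (c : ι → ℝ) :
    momentMatrix μ X *ᵥ c = fun i => ∫ ω, X ω i * (c ⬝ᵥ X ω) ∂μ := by
  funext i
  simp_rw [mul_comm (X _ i)]
  rw [integral_dotProduct_mul (fun j => (hX j).integrable_mul (hX i)), mulVec, dotProduct_comm]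
  simp only [momentMatrix, of_apply, mul_comm]

theorem integral_mul_sub_dotProduct (hX : ∀ i, MemLp (fun ω => X ω i) 2 μ) (hY : MemLp Y 2 μ)
    (c : ι → ℝ) :
    (fun i => ∫ ω, X ω i * (Y ω - c ⬝ᵥ X ω) ∂μ) = crossMoment μ X Y - momentMatrix μ X *ᵥ c := by
  rw [momentMatrix_mulVec hX]
  funext i
  simp only [mul_sub, Pi.sub_apply, crossMoment]
  exact integral_sub ((hX i).integrable_mul hY)
    ((hX i).integrable_mul (memLp_dotProduct hX c))

/-- The residual `Y - bᵀX` of a solution of the normal equations `K b = κ` is orthogonal to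
every `(a - b)ᵀX`, so the cross term of the square vanishes. -/
theorem integral_sq_sub_dotProduct_of_mulVec_eq (hX : ∀ i, MemLp (fun ω => X ω i) 2 μ)
    (hY : MemLp Y 2 μ) {b : ι → ℝ} (hb : momentMatrix μ X *ᵥ b = crossMoment μ X Y)
    (a : ι → ℝ) :
    ∫ ω, (Y ω - a ⬝ᵥ X ω) ^ 2 ∂μ
      = ∫ ω, (Y ω - b ⬝ᵥ X ω) ^ 2 ∂μ + (a - b) ⬝ᵥ momentMatrix μ X *ᵥ (a - b) := by
  set r := fun ω => Y ω - b ⬝ᵥ X ω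
  set s := fun ω => (a - b) ⬝ᵥ X ω
  have hr : MemLp r 2 μ := hY.sub (memLp_dotProduct hX b)
  have hs : MemLp s 2 μ := memLp_dotProduct hX (a - b)
  have hsplit :
      (fun ω => (Y ω - a ⬝ᵥ X ω) ^ 2) = fun ω => r ω ^ 2 + (s ω * s ω - 2 * (s ω * r ω)) := by
    funext ω
    simp only [r, s, sub_dotProduct]
    ring
  have hsr : ∫ ω, s ω * r ω ∂μ = 0 := by
    rw [integral_dotProduct_mul fun i => (hX i).integrable_mul hr,
      integral_mul_sub_dotProduct hX hY, hb, sub_self, dotProduct_zero]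
  have hss : ∫ ω, s ω * s ω ∂μ = (a - b) ⬝ᵥ momentMatrix μ X *ᵥ (a - b) := by
    rw [integral_dotProduct_mul fun i => (hX i).integrable_mul hs, momentMatrix_mulVec hX]
  have hss_int : Integrable (fun ω => s ω * s ω) μ := hs.integrable_mul hs
  have hsr_int : Integrable (fun ω => 2 * (s ω * r ω)) μ := (hs.integrable_mul hr).const_mul 2
  have hdiff_int : Integrable (fun ω => s ω * s ω - 2 * (s ω * r ω)) μ := hss_int.sub hsr_int
  rw [hsplit, integral_add hr.integrable_sq hdiff_int, integral_sub hss_int hsr_int,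
    integral_const_mul, hsr, hss, mul_zero, sub_zero]

end Moments

theorem HasFDerivAt.dotProduct_of_eq_zero {E ι : Type*} [NormedAddCommGroup E] [NormedSpace ℝ E]
    [Fintype ι] {f g : E → ι → ℝ} {f' g' : E →L[ℝ] ι → ℝ} {x : E}
    (hf : HasFDerivAt f f' x) (hg : HasFDerivAt g g' x) (hfx : f x = 0) (hgx : g x = 0) :
    HasFDerivAt (fun y => f y ⬝ᵥ g y) (0 : E →L[ℝ] ℝ) x := by
  let π (i : ι) : (ι → ℝ) →L[ℝ] ℝ := ContinuousLinearMap.proj i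
  have hsum : HasFDerivAt (fun y => ∑ i, f y i * g y i)
      (∑ i, (f x i • (π i).comp g' + g x i • (π i).comp f')) x :=
    HasFDerivAt.fun_sum fun i _ => (hasFDerivAt_pi'.1 hf i).mul (hasFDerivAt_pi'.1 hg i)
  simpa [dotProduct, hfx, hgx] using hsum

theorem stmt_3_general {Ω : Type*} [MeasurableSpace Ω] (μ : Measure Ω)
    {k p : ℕ} (X : Ω → Fin k → ℝ) (Y : Ω → ℝ)
    (hX : ∀ i, MemLp (fun ω => X ω i) 2 μ) (hY : MemLp Y 2 μ)
    (K : Matrix (Fin k) (Fin k) ℝ)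
    (hK : K = Matrix.of fun i j => ∫ ω, X ω i * X ω j ∂μ)
    (κ : Fin k → ℝ) (hκ : κ = fun i => ∫ ω, X ω i * Y ω ∂μ)
    (θ₀ : Fin p → ℝ)
    (φ : (Fin p → ℝ) → Fin k → ℝ) (v : (Fin p → ℝ) → ℝ)
    (Dφ : (Fin p → ℝ) →L[ℝ] (Fin k → ℝ)) (Dv : (Fin p → ℝ) →L[ℝ] ℝ)
    (hφdiff : HasFDerivAt φ Dφ θ₀) (hvdiff : HasFDerivAt v Dv θ₀)
    (hopt : K *ᵥ φ θ₀ = κ)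
    (h : (Fin p → ℝ) → (Fin k → ℝ) × ℝ)
    (hh : h = fun θ =>
      ((fun i => ∫ ω, X ω i * (Y ω - φ θ ⬝ᵥ X ω) ∂μ),
        (∫ ω, (Y ω - φ θ ⬝ᵥ X ω) ^ 2 ∂μ) - v θ)) :
    HasFDerivAt h
      (ContinuousLinearMap.prod
        (-(((Matrix.mulVecLin K).toContinuousLinearMap).comp Dφ)) (-Dv)) θ₀ := by
  change K = momentMatrix μ X at hK
  change κ = crossMoment μ X Y at hκ
  subst hK hκ
  set L := (Matrix.mulVecLin (momentMatrix μ X)).toContinuousLinearMap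
  have hform : h = fun θ => (crossMoment μ X Y - L (φ θ),
      ∫ ω, (Y ω - φ θ₀ ⬝ᵥ X ω) ^ 2 ∂μ + (φ θ - φ θ₀) ⬝ᵥ L (φ θ - φ θ₀) - v θ) := by
    rw [hh]
    funext θ
    rw [integral_mul_sub_dotProduct hX hY, integral_sq_sub_dotProduct_of_mulVec_eq hX hY hopt]
    rfl
  have hresidual : HasFDerivAt (fun θ => crossMoment μ X Y - L (φ θ)) (-L.comp Dφ) θ₀ :=
    ((hasFDerivAt_const _ θ₀).sub (L.hasFDerivAt.comp θ₀ hφdiff)).congr_fderiv (zero_sub _)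
  have hexcess : HasFDerivAt (fun θ => (φ θ - φ θ₀) ⬝ᵥ L (φ θ - φ θ₀)) 0 θ₀ :=
    (hφdiff.sub_const _).dotProduct_of_eq_zero (L.hasFDerivAt.comp θ₀ (hφdiff.sub_const _))
      (sub_self _) (by simp)
  rw [hform]
  exact hresidual.prodMk ((((hasFDerivAt_const _ θ₀).add hexcess).sub hvdiff).congr_fderiv
    (by simp))

/-- With `X` a centered square-integrable random vector in `ℝ^k` with
covariance matrix `K`, `Y` centered square-integrable, `κ = E[XY]`, `Θ ⊆ ℝ^p` open,
`φ : Θ → ℝ^k` and `v : Θ → ℝ` differentiable at `θ₀ ∈ Θ` with `K φ(θ₀) = κ`, the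
function `h(θ) = E[H(θ)]`, where
`H(θ) = (X (Y − φ(θ)ᵀX), (Y − φ(θ)ᵀX)² − v(θ))`,
is differentiable at `θ₀` with derivative `u ↦ (−K (Dφ(θ₀) u), −Dv(θ₀) u)`,
i.e. the Jacobian `−(K Dφ(θ₀) ; Dv(θ₀))`. -/
theorem stmt_3 {Ω : Type*} [MeasurableSpace Ω] (μ : Measure Ω) [IsProbabilityMeasure μ]
    {k p : ℕ} (X : Ω → Fin k → ℝ) (Y : Ω → ℝ)
    (hX : ∀ i, MemLp (fun ω => X ω i) 2 μ) (hY : MemLp Y 2 μ)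
    (hXcentered : ∀ i, ∫ ω, X ω i ∂μ = 0) (hYcentered : ∫ ω, Y ω ∂μ = 0)
    (K : Matrix (Fin k) (Fin k) ℝ)
    (hK : K = Matrix.of fun i j => ∫ ω, X ω i * X ω j ∂μ)
    (κ : Fin k → ℝ) (hκ : κ = fun i => ∫ ω, X ω i * Y ω ∂μ)
    (Θ : Set (Fin p → ℝ)) (hΘ : IsOpen Θ) (θ₀ : Fin p → ℝ) (hθ₀ : θ₀ ∈ Θ)
    (φ : (Fin p → ℝ) → Fin k → ℝ) (v : (Fin p → ℝ) → ℝ)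
    (Dφ : (Fin p → ℝ) →L[ℝ] (Fin k → ℝ)) (Dv : (Fin p → ℝ) →L[ℝ] ℝ)
    (hφdiff : HasFDerivAt φ Dφ θ₀) (hvdiff : HasFDerivAt v Dv θ₀)
    (hopt : K *ᵥ φ θ₀ = κ)
    (h : (Fin p → ℝ) → (Fin k → ℝ) × ℝ)
    (hh : h = fun θ =>
      ((fun i => ∫ ω, X ω i * (Y ω - φ θ ⬝ᵥ X ω) ∂μ),
        (∫ ω, (Y ω - φ θ ⬝ᵥ X ω) ^ 2 ∂μ) - v θ)) :
    HasFDerivAt h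
      (ContinuousLinearMap.prod
        (-(((Matrix.mulVecLin K).toContinuousLinearMap).comp Dφ)) (-Dv)) θ₀ :=
  stmt_3_general μ X Y hX hY K hK κ hκ θ₀ φ v Dφ Dv hφdiff hvdiff hopt h hh
end

section
/- Let S be a real p×(k+1) matrix of rank p, let M₁ be a symmetric positive definite (k+1)×(k+1) real matrix, and let M₂ be a symmetric positive semidefinite (k+1)×(k+1) real matrix; set M̄ = M₁ + M₂, W = S M₁⁻¹ Sᵀ and B = S M₁⁻¹ M₂ M₁⁻¹ Sᵀ. Then W and W + B are symmetric positive definite, and the p×p matrix S M̄⁻¹ Sᵀ − W (W + B)⁻¹ W is symmetric positive semidefinite. Equivalently, since W(W+B)⁻¹W = (W⁻¹ + W⁻¹ B W⁻¹)⁻¹, the inverse asymptotic covariance of the optimal prediction-based estimator, S M̄⁻¹ Sᵀ, dominates that of the maximum pseudo-likelihood estimator, (W⁻¹ + W⁻¹ B W⁻¹)⁻¹, in the positive semidefinite order. -/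
/-!
With `T = S M₁⁻¹` one has `W = S Tᵀ = T Sᵀ` and `W + B = T M̄ Tᵀ`, so the claim is the matrix
Cauchy–Schwarz inequality `S M̄⁻¹ Sᵀ ⪰ (S Tᵀ) (T M̄ Tᵀ)⁻¹ (T Sᵀ)`. That inequality says that a
Schur complement of the positive semidefinite Gram matrix `[X; Y] M̄ [X; Y]ᵀ`, with `X = S M̄⁻¹`
and `Y = T`, is positive semidefinite. Full row rank of `S` makes `W` and `W + B` definite.
-/

open Matrix

namespace Matrix

variable {m n l K : Type*} [Fintype m] [Fintype n] [Fintype l] [Field K]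

theorem vecMul_injective_of_rank_eq_card (A : Matrix m n K)
    (hA : A.rank = Fintype.card m) : Function.Injective A.vecMul := by
  rw [vecMul_injective_iff, linearIndependent_iff_card_eq_finrank_span, Set.finrank,
    ← rank_eq_finrank_span_row, hA]

variable [PartialOrder K] [StarRing K] [StarOrderedRing K] [DecidableEq l]

theorem PosSemidef.sub_mul_mul_inv_mul_mul_conjTranspose {M : Matrix n n K} (hM : M.PosSemidef)
    (X : Matrix m n K) (Y : Matrix l n K) (hY : (Y * M * Yᴴ).PosDef) :
    (X * M * Xᴴ - X * M * Yᴴ * (Y * M * Yᴴ)⁻¹ * (Y * M * Xᴴ)).PosSemidef := by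
  have : Invertible (Y * M * Yᴴ) := hY.isUnit.invertible
  have hGram : fromBlocks (X * M * Xᴴ) (X * M * Yᴴ) (X * M * Yᴴ)ᴴ (Y * M * Yᴴ) =
      fromRows X Y * M * (fromRows X Y)ᴴ := by
    simp [conjTranspose_fromRows_eq_fromCols_conjTranspose, hM.isHermitian.eq, Matrix.mul_assoc]
  have hSchur := (PosDef.fromBlocks₂₂ (X * M * Xᴴ) (X * M * Yᴴ) hY).mp
    (hGram ▸ hM.mul_mul_conjTranspose_same _)
  simpa [hM.isHermitian.eq, Matrix.mul_assoc] using hSchur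

variable [DecidableEq n]

theorem PosDef.sub_mul_conjTranspose_mul_inv_mul {M : Matrix n n K} (hM : M.PosDef)
    (A : Matrix m n K) (B : Matrix l n K) (hB : (B * M * Bᴴ).PosDef) :
    (A * M⁻¹ * Aᴴ - A * Bᴴ * (B * M * Bᴴ)⁻¹ * (B * Aᴴ)).PosSemidef := by
  have hdet : IsUnit M.det := (isUnit_iff_isUnit_det M).mp hM.isUnit
  have hAM : (A * M⁻¹)ᴴ = M⁻¹ * Aᴴ := by
    rw [conjTranspose_mul, hM.inv.isHermitian.eq]
  have hBA : B * M * (M⁻¹ * Aᴴ) = B * Aᴴ := by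
    rw [Matrix.mul_assoc, mul_nonsing_inv_cancel_left M Aᴴ hdet]
  have key := hM.posSemidef.sub_mul_mul_inv_mul_mul_conjTranspose (A * M⁻¹) B hB
  rwa [hAM, nonsing_inv_mul_cancel_right M A hdet, hBA, ← Matrix.mul_assoc] at key

end Matrix

/-- Let `S` be a real `p×(k+1)` matrix of rank `p`, `M₁` symmetric positive
definite and `M₂` symmetric positive semidefinite of size `(k+1)×(k+1)`; set
`M̄ = M₁ + M₂`, `W = S M₁⁻¹ Sᵀ` and `B = S M₁⁻¹ M₂ M₁⁻¹ Sᵀ`. Then `W` and `W + B` are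
symmetric positive definite and `S M̄⁻¹ Sᵀ − W (W + B)⁻¹ W` is symmetric positive
semidefinite. -/
theorem stmt_9 {p k : ℕ} (S : Matrix (Fin p) (Fin k ⊕ Unit) ℝ) (hS : S.rank = p)
    (M₁ M₂ : Matrix (Fin k ⊕ Unit) (Fin k ⊕ Unit) ℝ)
    (hM₁ : M₁.PosDef) (hM₂ : M₂.PosSemidef)
    (Mbar : Matrix (Fin k ⊕ Unit) (Fin k ⊕ Unit) ℝ) (hMbar : Mbar = M₁ + M₂)
    (W B : Matrix (Fin p) (Fin p) ℝ)
    (hW : W = S * M₁⁻¹ * Sᵀ) (hB : B = S * M₁⁻¹ * M₂ * M₁⁻¹ * Sᵀ) :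
    W.PosDef ∧ (W + B).PosDef ∧
      (S * Mbar⁻¹ * Sᵀ - W * (W + B)⁻¹ * W).PosSemidef := by
  subst hMbar hW hB
  simp only [← conjTranspose_eq_transpose_of_trivial]
  have hSinj : Function.Injective S.vecMul :=
    S.vecMul_injective_of_rank_eq_card (by rwa [Fintype.card_fin])
  have hTinj : Function.Injective (S * M₁⁻¹).vecMul := by
    simpa only [Function.comp_def, vecMul_vecMul] using
      (vecMul_injective_of_isUnit (isUnit_nonsing_inv_iff.mpr hM₁.isUnit)).comp hSinj
  have hTH : (S * M₁⁻¹)ᴴ = M₁⁻¹ * Sᴴ := by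
    rw [conjTranspose_mul, hM₁.inv.isHermitian.eq]
  have hdet : IsUnit M₁.det := (isUnit_iff_isUnit_det M₁).mp hM₁.isUnit
  have hWB : S * M₁⁻¹ * Sᴴ + S * M₁⁻¹ * M₂ * M₁⁻¹ * Sᴴ =
      S * M₁⁻¹ * (M₁ + M₂) * (S * M₁⁻¹)ᴴ := by
    rw [hTH, Matrix.mul_add, nonsing_inv_mul_cancel_right M₁ S hdet, Matrix.add_mul]
    simp only [Matrix.mul_assoc]
  have hWBpd := (hM₁.add_posSemidef hM₂).mul_mul_conjTranspose_same hTinj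
  refine ⟨hM₁.inv.mul_mul_conjTranspose_same hSinj, hWB ▸ hWBpd, ?_⟩
  have key := (hM₁.add_posSemidef hM₂).sub_mul_conjTranspose_mul_inv_mul S (S * M₁⁻¹) hWBpd
  rwa [← hWB, hTH, ← Matrix.mul_assoc S] at key
end

section
/- Let σ > 0, r > 0, and a, b be real numbers with |b| < −a (so a < 0), and set λ = √(a² − b²) > 0. Assume a + b·cosh(λr) ≠ 0 and define K₀ = σ²(b·sinh(λr) − λ) / (2λ(a + b·cosh(λr))) and, for t ∈ [0, r], K(t) = K₀·cosh(λt) − (σ²/(2λ))·sinh(λt). Then for all t ∈ (0, r), K′(t) = a·K(t) + b·K(r − t) (the delay Yule–Walker equation ∂_t K(t) = a K(t) + b K(t − r) with the even extension K(t − r) = K(r − t)), K′(0⁺) = −σ²/2, and the boundary condition 2(a·K(0) + b·K(r)) = −σ² holds. -/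
/-!
The candidate `K(t) = K₀ cosh(λt) − c sinh(λt)` with `c = σ²/(2λ)` has derivative
`λ(K₀ sinh(λt) − c cosh(λt))`, while by the addition formulas `a K(t) + b K(r − t)` is again a
combination of `cosh(λt)` and `sinh(λt)`. Matching coefficients reduces the delay equation to
two linear relations between `K₀` and `c`: the first one is the choice of `K₀`, and the second
follows from it because `λ² = a² − b²` and `cosh² − sinh² = 1`. The right derivative at `0` is
`−λc = −σ²/2`, and the boundary condition is the first relation evaluated at `t = 0`.
-/

open Real Set

theorem hasDerivAt_cosh_mul_sub_sinh_mul (A C lam t : ℝ) :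
    HasDerivAt (fun t => A * cosh (lam * t) - C * sinh (lam * t))
      (lam * (A * sinh (lam * t) - C * cosh (lam * t))) t := by
  have hlin : HasDerivAt (fun t => lam * t) lam t := by
    simpa using (hasDerivAt_id t).const_mul lam
  have hcosh := ((hasDerivAt_cosh (lam * t)).comp t hlin).const_mul A
  have hsinh := ((hasDerivAt_sinh (lam * t)).comp t hlin).const_mul C
  exact (hcosh.sub hsinh).congr_deriv (by ring)

theorem cosh_mul_sub_sinh_mul_delay_eq {a b r lam K₀ C : ℝ} (hlam : lam ^ 2 = a ^ 2 - b ^ 2)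
    (hden : a + b * cosh (lam * r) ≠ 0)
    (hK₀ : K₀ * (a + b * cosh (lam * r)) = C * (b * sinh (lam * r) - lam)) (t : ℝ) :
    lam * (K₀ * sinh (lam * t) - C * cosh (lam * t)) =
      a * (K₀ * cosh (lam * t) - C * sinh (lam * t)) +
        b * (K₀ * cosh (lam * (r - t)) - C * sinh (lam * (r - t))) := by
  have hpyth := cosh_sq_sub_sinh_sq (lam * r)
  have hcompanion : K₀ * (lam + b * sinh (lam * r)) = C * (b * cosh (lam * r) - a) := by
    apply mul_right_cancel₀ hden
    linear_combination (lam + b * sinh (lam * r)) * hK₀ - C * b ^ 2 * hpyth - C * hlam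
  rw [mul_sub lam r, cosh_sub, sinh_sub]
  linear_combination sinh (lam * t) * hcompanion - cosh (lam * t) * hK₀

theorem stmt_10_general {σ r a b : ℝ} (hab : |b| < -a)
    (lam : ℝ) (hlam : lam = Real.sqrt (a ^ 2 - b ^ 2))
    (hden : a + b * Real.cosh (lam * r) ≠ 0)
    (K₀ : ℝ)
    (hK₀ : K₀ = σ ^ 2 * (b * Real.sinh (lam * r) - lam) /
      (2 * lam * (a + b * Real.cosh (lam * r))))
    (K : ℝ → ℝ)
    (hK : K = fun t => K₀ * Real.cosh (lam * t) - σ ^ 2 / (2 * lam) * Real.sinh (lam * t)) :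
    (∀ t ∈ Ioo 0 r, HasDerivAt K (a * K t + b * K (r - t)) t) ∧
      HasDerivWithinAt K (-σ ^ 2 / 2) (Ici 0) 0 ∧
      2 * (a * K 0 + b * K r) = -σ ^ 2 := by
  have hb2 : b ^ 2 < a ^ 2 := sq_lt_sq.2 (hab.trans_le (neg_le_abs a))
  have hlam_pos : 0 < lam := hlam ▸ sqrt_pos.2 (sub_pos.2 hb2)
  have hlam_sq : lam ^ 2 = a ^ 2 - b ^ 2 := hlam ▸ sq_sqrt (sub_nonneg.2 hb2.le)
  have hK₀' : K₀ * (a + b * cosh (lam * r)) = σ ^ 2 / (2 * lam) * (b * sinh (lam * r) - lam) := by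
    rw [hK₀]; field_simp
  subst hK
  refine ⟨fun t _ => ?_, ?_, ?_⟩
  · exact (hasDerivAt_cosh_mul_sub_sinh_mul _ _ lam t).congr_deriv
      (cosh_mul_sub_sinh_mul_delay_eq hlam_sq hden hK₀' t)
  · refine (hasDerivAt_cosh_mul_sub_sinh_mul _ _ lam 0).hasDerivWithinAt.congr_deriv ?_
    simp only [mul_zero, sinh_zero, cosh_zero]
    field_simp
    ring
  · simp only [mul_zero, cosh_zero, sinh_zero, mul_one, sub_zero]
    have hc : σ ^ 2 / (2 * lam) * lam = σ ^ 2 / 2 := by field_simp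
    linear_combination 2 * hK₀' - 2 * hc

/-- In the case `|b| < −a` of the affine delay equation
`dX(t) = [aX(t) + bX(t−r)]dt + σ dW(t)`, the function
`K(t) = K₀ cosh(λt) − (σ²/(2λ)) sinh(λt)` with `λ = √(a² − b²)` and
`K₀ = σ²(b sinh(λr) − λ)/(2λ(a + b cosh(λr)))` satisfies the delay Yule–Walker
equation `K′(t) = aK(t) + bK(r − t)` on `(0, r)`, has right derivative `−σ²/2` at `0`
and satisfies the boundary condition `2(aK(0) + bK(r)) = −σ²`. -/
theorem stmt_10 {σ r a b : ℝ} (hσ : 0 < σ) (hr : 0 < r) (hab : |b| < -a)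
    (lam : ℝ) (hlam : lam = Real.sqrt (a ^ 2 - b ^ 2))
    (hden : a + b * Real.cosh (lam * r) ≠ 0)
    (K₀ : ℝ)
    (hK₀ : K₀ = σ ^ 2 * (b * Real.sinh (lam * r) - lam) /
      (2 * lam * (a + b * Real.cosh (lam * r))))
    (K : ℝ → ℝ)
    (hK : K = fun t => K₀ * Real.cosh (lam * t) - σ ^ 2 / (2 * lam) * Real.sinh (lam * t)) :
    (∀ t ∈ Ioo 0 r, HasDerivAt K (a * K t + b * K (r - t)) t) ∧
      HasDerivWithinAt K (-σ ^ 2 / 2) (Ici 0) 0 ∧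
      2 * (a * K 0 + b * K r) = -σ ^ 2 :=
  stmt_10_general hab lam hlam hden K₀ hK₀ K hK
end

section
/- Let σ > 0, r > 0, and let a = b < 0 be real. Define K₀ = σ²(b r − 1)/(4b) and, for t ∈ [0, r], K(t) = K₀ − (σ²/2)·t. Then for all t ∈ (0, r), K′(t) = a·K(t) + b·K(r − t) (the delay Yule–Walker equation with the even extension K(t − r) = K(r − t)), K′(0⁺) = −σ²/2, and 2(a·K(0) + b·K(r)) = −σ². -/
open Real Set

/-! Since `K` is affine with slope `-σ²/2`, the right-hand side `a K(t) + a K(r - t)` of the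
Yule–Walker equation does not depend on `t`: it equals `a (K(0) + K(r)) = a (2K₀ - σ²r/2)`.
The choice of `K₀` is exactly the one making this constant equal to the slope `-σ²/2`, which
gives the Yule–Walker equation and the boundary condition at once. -/

theorem hasDerivAt_const_sub_mul (c m x : ℝ) : HasDerivAt (fun t => c - m * t) (-m) x := by
  simpa using ((hasDerivAt_id x).const_mul m).const_sub c

theorem mul_two_mul_sub_eq_neg_half {σ r b : ℝ} (hb : b ≠ 0) :
    b * (2 * (σ ^ 2 * (b * r - 1) / (4 * b)) - σ ^ 2 / 2 * r) = -σ ^ 2 / 2 := by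
  field_simp
  ring

theorem stmt_11_general {σ r a b : ℝ} (hab : a = b) (hb : b < 0)
    (K₀ : ℝ) (hK₀ : K₀ = σ ^ 2 * (b * r - 1) / (4 * b))
    (K : ℝ → ℝ) (hK : K = fun t => K₀ - σ ^ 2 / 2 * t) :
    (∀ t ∈ Ioo 0 r, HasDerivAt K (a * K t + b * K (r - t)) t) ∧
      HasDerivWithinAt K (-σ ^ 2 / 2) (Ici 0) 0 ∧
      2 * (a * K 0 + b * K r) = -σ ^ 2 := by
  subst hab hK
  have hderiv (t : ℝ) : HasDerivAt (fun t => K₀ - σ ^ 2 / 2 * t) (-σ ^ 2 / 2) t := by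
    simpa only [neg_div] using hasDerivAt_const_sub_mul K₀ (σ ^ 2 / 2) t
  have hconst (t : ℝ) :
      a * (K₀ - σ ^ 2 / 2 * t) + a * (K₀ - σ ^ 2 / 2 * (r - t)) = -σ ^ 2 / 2 := by
    rw [← mul_two_mul_sub_eq_neg_half hb.ne, ← hK₀]
    ring
  refine ⟨fun t _ => ?_, (hderiv 0).hasDerivWithinAt, ?_⟩
  · simpa only [hconst] using hderiv t
  · linarith [hconst 0]

/-- In the boundary case `a = b < 0` of the affine delay equation, the
function `K(t) = K₀ − (σ²/2)t` with `K₀ = σ²(br − 1)/(4b)` satisfies the delay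
Yule–Walker equation `K′(t) = aK(t) + bK(r − t)` on `(0, r)`, has right derivative
`−σ²/2` at `0` and satisfies `2(aK(0) + bK(r)) = −σ²`. -/
theorem stmt_11 {σ r a b : ℝ} (hσ : 0 < σ) (hr : 0 < r) (hab : a = b) (hb : b < 0)
    (K₀ : ℝ) (hK₀ : K₀ = σ ^ 2 * (b * r - 1) / (4 * b))
    (K : ℝ → ℝ) (hK : K = fun t => K₀ - σ ^ 2 / 2 * t) :
    (∀ t ∈ Ioo 0 r, HasDerivAt K (a * K t + b * K (r - t)) t) ∧
      HasDerivWithinAt K (-σ ^ 2 / 2) (Ici 0) 0 ∧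
      2 * (a * K 0 + b * K r) = -σ ^ 2 :=
  stmt_11_general hab hb K₀ hK₀ K hK
end

section
/- Let σ > 0, r > 0, and a, b be real numbers with b < −|a|, and set λ = √(b² − a²) > 0. Assume a + b·cos(λr) ≠ 0 and define K₀ = σ²(b·sin(λr) − λ) / (2λ(a + b·cos(λr))) and, for t ∈ [0, r], K(t) = K₀·cos(λt) − (σ²/(2λ))·sin(λt). Then for all t ∈ (0, r), K′(t) = a·K(t) + b·K(r − t) (the delay Yule–Walker equation with the even extension K(t − r) = K(r − t)), K′(0⁺) = −σ²/2, and 2(a·K(0) + b·K(r)) = −σ². -/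
open Real Set

/-! Every `K(t) = A cos(λt) + B sin(λt)` satisfies the delay equation `K′(t) = aK(t) + bK(r − t)`
as soon as the coefficients of `cos(λt)` and `sin(λt)` on both sides agree, which is a pair of
linear equations in `(A, B)`. For `B = −σ²/(2λ)` the `cos` equation is the definition of `K₀`,
and the `sin` equation then follows from `λ² = b² − a²` and `sin² + cos² = 1`. The `cos` equation
also says `aK(0) + bK(r) = λB = K′(0)`, which gives the two boundary conditions. -/

lemma sq_lt_sq_of_lt_neg_abs {a b : ℝ} (h : b < -|a|) : a ^ 2 < b ^ 2 := by
  have hb : b < 0 := by linarith [abs_nonneg a]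
  exact sq_lt_sq.mpr (by rw [abs_of_neg hb]; linarith)

lemma hasDerivAt_cos_add_sin (A B lam t : ℝ) :
    HasDerivAt (fun t => A * cos (lam * t) + B * sin (lam * t))
      (lam * (B * cos (lam * t) - A * sin (lam * t))) t := by
  have hlin : HasDerivAt (fun t => lam * t) lam t := by
    simpa using (hasDerivAt_id t).const_mul lam
  exact ((((hasDerivAt_cos _).comp t hlin).const_mul A).add
    (((hasDerivAt_sin _).comp t hlin).const_mul B)).congr_deriv (by ring)

section DelayEquation

variable {a b r lam A B : ℝ}

lemma hasDerivAt_cos_add_sin_delay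
    (hcos : lam * B = a * A + b * (A * cos (lam * r) + B * sin (lam * r)))
    (hsin : -(lam * A) = a * B + b * (A * sin (lam * r) - B * cos (lam * r))) (t : ℝ) :
    HasDerivAt (fun t => A * cos (lam * t) + B * sin (lam * t))
      (a * (A * cos (lam * t) + B * sin (lam * t))
        + b * (A * cos (lam * (r - t)) + B * sin (lam * (r - t)))) t := by
  convert hasDerivAt_cos_add_sin A B lam t using 1
  rw [mul_sub, cos_sub, sin_sub]
  linear_combination (-cos (lam * t)) * hcos - sin (lam * t) * hsin

lemma cos_add_sin_boundary
    (hcos : lam * B = a * A + b * (A * cos (lam * r) + B * sin (lam * r))) :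
    a * (A * cos (lam * 0) + B * sin (lam * 0))
      + b * (A * cos (lam * r) + B * sin (lam * r)) = lam * B := by
  simp only [mul_zero, cos_zero, sin_zero]
  linarith

end DelayEquation

lemma yuleWalker_coeffs {σ r a b lam K₀ : ℝ} (hlam : lam ≠ 0) (hl2 : lam ^ 2 = b ^ 2 - a ^ 2)
    (hden : a + b * cos (lam * r) ≠ 0)
    (hK₀ : K₀ = σ ^ 2 * (b * sin (lam * r) - lam) / (2 * lam * (a + b * cos (lam * r)))) :
    lam * -(σ ^ 2 / (2 * lam))
        = a * K₀ + b * (K₀ * cos (lam * r) + -(σ ^ 2 / (2 * lam)) * sin (lam * r)) ∧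
      -(lam * K₀)
        = a * -(σ ^ 2 / (2 * lam))
          + b * (K₀ * sin (lam * r) - -(σ ^ 2 / (2 * lam)) * cos (lam * r)) := by
  have hK₀' : K₀ * (2 * lam * (a + b * cos (lam * r))) = σ ^ 2 * (b * sin (lam * r) - lam) := by
    rw [hK₀]; field_simp
  -- multiplying the `sin` equation by `2λ(a + b cos(λr))` reduces it to the `cos` equation
  have hsin : K₀ * (lam + b * sin (lam * r)) * (2 * lam) = σ ^ 2 * (a - b * cos (lam * r)) := by
    apply mul_right_cancel₀ hden
    linear_combination (lam + b * sin (lam * r)) * hK₀'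
      + σ ^ 2 * b ^ 2 * sin_sq_add_cos_sq (lam * r) - σ ^ 2 * hl2
  constructor
  · field_simp
    linear_combination -hK₀'
  · field_simp
    linear_combination -hsin

theorem stmt_12_general {σ r a b : ℝ} (hab : b < -|a|)
    (lam : ℝ) (hlam : lam = Real.sqrt (b ^ 2 - a ^ 2))
    (hden : a + b * Real.cos (lam * r) ≠ 0)
    (K₀ : ℝ)
    (hK₀ : K₀ = σ ^ 2 * (b * Real.sin (lam * r) - lam) /
      (2 * lam * (a + b * Real.cos (lam * r))))
    (K : ℝ → ℝ)
    (hK : K = fun t => K₀ * Real.cos (lam * t) - σ ^ 2 / (2 * lam) * Real.sin (lam * t)) :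
    (∀ t ∈ Ioo 0 r, HasDerivAt K (a * K t + b * K (r - t)) t) ∧
      HasDerivWithinAt K (-σ ^ 2 / 2) (Ici 0) 0 ∧
      2 * (a * K 0 + b * K r) = -σ ^ 2 := by
  have hab2 := sub_pos.mpr (sq_lt_sq_of_lt_neg_abs hab)
  have hlpos : 0 < lam := hlam ▸ sqrt_pos.mpr hab2
  have hl2 : lam ^ 2 = b ^ 2 - a ^ 2 := hlam ▸ sq_sqrt hab2.le
  have hK' : K = fun t => K₀ * cos (lam * t) + -(σ ^ 2 / (2 * lam)) * sin (lam * t) := by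
    rw [hK]; funext t; ring
  obtain ⟨hcos, hsin⟩ := yuleWalker_coeffs hlpos.ne' hl2 hden hK₀
  have hlamB : lam * -(σ ^ 2 / (2 * lam)) = -σ ^ 2 / 2 := by field_simp
  subst hK'
  refine ⟨fun t _ ↦ hasDerivAt_cos_add_sin_delay hcos hsin t, ?_, ?_⟩
  · have := (hasDerivAt_cos_add_sin K₀ (-(σ ^ 2 / (2 * lam))) lam 0).hasDerivWithinAt (s := Ici 0)
    simpa only [mul_zero, cos_zero, sin_zero, mul_one, sub_zero, hlamB] using this
  · rw [cos_add_sin_boundary hcos, hlamB]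
    ring

/-- In the case `b < −|a|` of the affine delay equation, the function
`K(t) = K₀ cos(λt) − (σ²/(2λ)) sin(λt)` with `λ = √(b² − a²)` and
`K₀ = σ²(b sin(λr) − λ)/(2λ(a + b cos(λr)))` satisfies the delay Yule–Walker equation
`K′(t) = aK(t) + bK(r − t)` on `(0, r)`, has right derivative `−σ²/2` at `0` and
satisfies `2(aK(0) + bK(r)) = −σ²`. -/
theorem stmt_12 {σ r a b : ℝ} (hσ : 0 < σ) (hr : 0 < r) (hab : b < -|a|)
    (lam : ℝ) (hlam : lam = Real.sqrt (b ^ 2 - a ^ 2))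
    (hden : a + b * Real.cos (lam * r) ≠ 0)
    (K₀ : ℝ)
    (hK₀ : K₀ = σ ^ 2 * (b * Real.sin (lam * r) - lam) /
      (2 * lam * (a + b * Real.cos (lam * r))))
    (K : ℝ → ℝ)
    (hK : K = fun t => K₀ * Real.cos (lam * t) - σ ^ 2 / (2 * lam) * Real.sin (lam * t)) :
    (∀ t ∈ Ioo 0 r, HasDerivAt K (a * K t + b * K (r - t)) t) ∧
      HasDerivWithinAt K (-σ ^ 2 / 2) (Ici 0) 0 ∧
      2 * (a * K 0 + b * K r) = -σ ^ 2 :=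
  stmt_12_general hab lam hlam hden K₀ hK₀ K hK
end

section
/- Let σ > 0, r > 0 and b < 0 with b·r ∈ (−π/2, 0). Define, for t ∈ [0, r], K(t) = −(σ²/(2b))·( ((1 − sin(br))/cos(br))·cos(bt) + sin(bt) ). Then for all t ∈ (0, r), K′(t) = b·K(r − t) (the delay Yule–Walker equation K′(t) = b K(t − r) with the even extension K(t − r) = K(r − t)), K′(0⁺) = −σ²/2, and 2·b·K(r) = −σ². -/
/-!
Writing `θ = b r` and `f x = ((1 - sin θ) / cos θ) cos x + sin x`, the function `K` is
`-(σ² / (2b)) f(b t)`. The delay equation for `K` is the reflection identity `f' x = f (θ - x)`,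
which amounts to `f θ = 1` and `(1 - sin θ)(1 + sin θ) = cos² θ`. Then `f θ = 1` gives
`2 b K(r) = -σ²`, and the delay equation at `t = 0` gives `K'(0) = b K(r) = -σ² / 2`.
-/

open Real Set

noncomputable def delayCovShape (θ x : ℝ) : ℝ :=
  (1 - sin θ) / cos θ * cos x + sin x

section delayCovShape

variable {θ : ℝ}

theorem delayCovShape_self (hθ : cos θ ≠ 0) : delayCovShape θ θ = 1 := by
  unfold delayCovShape
  field_simp
  ring

theorem delayCovShape_sub (hθ : cos θ ≠ 0) (x : ℝ) :
    delayCovShape θ (θ - x) = cos x - (1 - sin θ) / cos θ * sin x := by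
  unfold delayCovShape
  rw [cos_sub, sin_sub]
  field_simp
  linear_combination (-sin x) * sin_sq_add_cos_sq θ

theorem hasDerivAt_delayCovShape (hθ : cos θ ≠ 0) (x : ℝ) :
    HasDerivAt (delayCovShape θ) (delayCovShape θ (θ - x)) x := by
  rw [delayCovShape_sub hθ]
  refine (((hasDerivAt_cos x).const_mul ((1 - sin θ) / cos θ)).add
    (hasDerivAt_sin x)).congr_deriv ?_
  ring

end delayCovShape

theorem hasDerivAt_const_mul_delayCovShape {b r : ℝ} (hbr : cos (b * r) ≠ 0) (C t : ℝ) :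
    HasDerivAt (fun t => C * delayCovShape (b * r) (b * t))
      (b * (C * delayCovShape (b * r) (b * (r - t)))) t := by
  have hscale : HasDerivAt (fun t => b * t) b t := by
    simpa using (hasDerivAt_id t).const_mul b
  refine (((hasDerivAt_delayCovShape hbr (b * t)).comp t hscale).const_mul C).congr_deriv ?_
  rw [mul_sub]
  ring

theorem stmt_13_general {σ r b : ℝ}
    (hbr : b * r ∈ Ioo (-(π / 2)) 0)
    (K : ℝ → ℝ)
    (hK : K = fun t => -(σ ^ 2 / (2 * b)) *
      ((1 - Real.sin (b * r)) / Real.cos (b * r) * Real.cos (b * t) + Real.sin (b * t))) :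
    (∀ t ∈ Ioo 0 r, HasDerivAt K (b * K (r - t)) t) ∧
      HasDerivWithinAt K (-σ ^ 2 / 2) (Ici 0) 0 ∧
      2 * b * K r = -σ ^ 2 := by
  have hcos : cos (b * r) ≠ 0 :=
    (cos_pos_of_mem_Ioo ⟨hbr.1, hbr.2.trans (by positivity)⟩).ne'
  have hb : b ≠ 0 := by
    rintro rfl
    simp at hbr
  replace hK : K = fun t => -(σ ^ 2 / (2 * b)) * delayCovShape (b * r) (b * t) := hK
  have hderiv : ∀ t, HasDerivAt K (b * K (r - t)) t := by
    subst hK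
    exact hasDerivAt_const_mul_delayCovShape hcos _
  have hKr : 2 * b * K r = -σ ^ 2 := by
    simp only [hK, delayCovShape_self hcos]
    field_simp
  refine ⟨fun t _ => hderiv t, ?_, hKr⟩
  refine (hderiv 0).hasDerivWithinAt.congr_deriv ?_
  rw [sub_zero]
  linarith

/-- For the pure delay equation `dX(t) = bX(t−r)dt + σ dW(t)` with
`br ∈ (−π/2, 0)`, the function
`K(t) = −(σ²/(2b)) ( ((1 − sin(br))/cos(br)) cos(bt) + sin(bt) )` satisfies the delay
Yule–Walker equation `K′(t) = bK(r − t)` on `(0, r)`, has right derivative `−σ²/2`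
at `0` and satisfies `2bK(r) = −σ²`. -/
theorem stmt_13 {σ r b : ℝ} (hσ : 0 < σ) (hr : 0 < r) (hb : b < 0)
    (hbr : b * r ∈ Ioo (-(π / 2)) 0)
    (K : ℝ → ℝ)
    (hK : K = fun t => -(σ ^ 2 / (2 * b)) *
      ((1 - Real.sin (b * r)) / Real.cos (b * r) * Real.cos (b * t) + Real.sin (b * t))) :
    (∀ t ∈ Ioo 0 r, HasDerivAt K (b * K (r - t)) t) ∧
      HasDerivWithinAt K (-σ ^ 2 / 2) (Ici 0) 0 ∧
      2 * b * K r = -σ ^ 2 :=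
  stmt_13_general hbr K hK
end

section
/- Let σ > 0, r > 0 and b < 0 with b·r ∈ (−π/2, 0). Define K₁ on [0, r] by K₁(t) = −(σ²/(2b))·( ((1 − sin(br))/cos(br))·cos(bt) + sin(bt) ), and define K₂ on [r, 2r] by K₂(t) = −(σ²/(2b))·[ 2 + (sin(bt) − tan(br)·cos(bt))·(1 − 2·sin(br)) − cos(bt)/cos(br) ]. Then K₂(r) = K₁(r) and, for all t ∈ (r, 2r), K₂′(t) = b·K₁(t − r); equivalently, K₂(t) = b·∫_r^t K₁(s − r) ds + K₁(r) for all t ∈ [r, 2r]. (Where cos(bt) ≠ 0, K₂(t) coincides with the expression −(σ²/(2b))[2 + cos(bt){(tan(bt) − tan(br))(1 − 2 sin(br)) − 1/cos(br)}].) -/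
/-!
In the variable `x = b t` and with `θ = b r`, both brackets equal `1` at `x = θ`, and the
derivative of the bracket of `K₂` is the bracket of `K₁` at `x - θ`: expanding `sin (x - θ)`,
`cos (x - θ)` and `tan θ`, the two sides agree modulo `sin² θ + cos² θ = 1`. The integral form
is then the fundamental theorem of calculus.
-/

open Real Set

noncomputable section

/-- `K₁` and `K₂` are `t ↦ -(σ²/(2b)) · covFirst (b r) (b t)` and
`t ↦ -(σ²/(2b)) · covSecond (b r) (b t)`. -/
def covFirst (θ x : ℝ) : ℝ := (1 - sin θ) / cos θ * cos x + sin x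

def covSecond (θ x : ℝ) : ℝ :=
  2 + (sin x - tan θ * cos x) * (1 - 2 * sin θ) - cos x / cos θ

variable {θ : ℝ}

lemma covFirst_self (h : cos θ ≠ 0) : covFirst θ θ = 1 := by
  unfold covFirst
  field_simp
  ring

lemma covSecond_self (h : cos θ ≠ 0) : covSecond θ θ = 1 := by
  unfold covSecond
  rw [tan_eq_sin_div_cos]
  field_simp
  ring

lemma hasDerivAt_covSecond (h : cos θ ≠ 0) (x : ℝ) :
    HasDerivAt (covSecond θ) (covFirst θ (x - θ)) x := by
  have hderiv : HasDerivAt (covSecond θ)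
      ((cos x - tan θ * -sin x) * (1 - 2 * sin θ) - -sin x / cos θ) x :=
    ((((hasDerivAt_sin x).sub ((hasDerivAt_cos x).const_mul _)).mul_const _).const_add 2).sub
      ((hasDerivAt_cos x).div_const _)
  convert hderiv using 1
  rw [covFirst, sin_sub, cos_sub, tan_eq_sin_div_cos]
  field_simp
  linear_combination sin x * sin_sq_add_cos_sq θ

lemma hasDerivAt_const_mul_covSecond_mul (c b r t : ℝ) (h : cos (b * r) ≠ 0) :
    HasDerivAt (fun t => c * covSecond (b * r) (b * t))
      (b * (c * covFirst (b * r) (b * (t - r)))) t := by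
  have hchain := (hasDerivAt_covSecond h (b * t)).comp t ((hasDerivAt_id t).const_mul b)
  exact (hchain.const_mul c).congr_deriv (by rw [mul_sub]; ring)

end

theorem stmt_14_general {σ r b : ℝ}
    (hbr : b * r ∈ Ioo (-(π / 2)) 0)
    (K₁ : ℝ → ℝ)
    (hK₁ : K₁ = fun t => -(σ ^ 2 / (2 * b)) *
      ((1 - Real.sin (b * r)) / Real.cos (b * r) * Real.cos (b * t) + Real.sin (b * t)))
    (K₂ : ℝ → ℝ)
    (hK₂ : K₂ = fun t => -(σ ^ 2 / (2 * b)) *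
      (2 + (Real.sin (b * t) - Real.tan (b * r) * Real.cos (b * t)) *
          (1 - 2 * Real.sin (b * r)) - Real.cos (b * t) / Real.cos (b * r))) :
    K₂ r = K₁ r ∧
      (∀ t ∈ Ioo r (2 * r), HasDerivAt K₂ (b * K₁ (t - r)) t) ∧
      ∀ t ∈ Icc r (2 * r), K₂ t = b * (∫ s in r..t, K₁ (s - r)) + K₁ r := by
  have hcos : cos (b * r) ≠ 0 :=
    (cos_pos_of_mem_Ioo ⟨hbr.1, hbr.2.trans (by positivity)⟩).ne'
  change K₁ = fun t => _ * covFirst (b * r) (b * t) at hK₁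
  change K₂ = fun t => _ * covSecond (b * r) (b * t) at hK₂
  have hinit : K₂ r = K₁ r := by
    simp only [hK₁, hK₂, covSecond_self hcos, covFirst_self hcos]
  have hderiv (t : ℝ) : HasDerivAt K₂ (b * K₁ (t - r)) t := by
    rw [hK₁, hK₂]
    exact hasDerivAt_const_mul_covSecond_mul _ b r t hcos
  have hcont : Continuous fun s => b * K₁ (s - r) := by
    rw [hK₁]
    unfold covFirst
    fun_prop
  refine ⟨hinit, fun t _ => hderiv t, fun t _ => ?_⟩
  have hftc := intervalIntegral.integral_eq_sub_of_hasDerivAt (fun s _ => hderiv s)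
    (hcont.intervalIntegrable r t)
  rw [intervalIntegral.integral_const_mul] at hftc
  linarith

/-- For the pure delay equation with `br ∈ (−π/2, 0)`, with
`K₁(t) = −(σ²/(2b))(((1 − sin(br))/cos(br)) cos(bt) + sin(bt))` on `[0, r]` and
`K₂(t) = −(σ²/(2b))[2 + (sin(bt) − tan(br) cos(bt))(1 − 2 sin(br)) − cos(bt)/cos(br)]`
on `[r, 2r]`, we have `K₂(r) = K₁(r)`, `K₂′(t) = bK₁(t − r)` for `t ∈ (r, 2r)`, and
`K₂(t) = b ∫_r^t K₁(s − r) ds + K₁(r)` for `t ∈ [r, 2r]`. -/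
theorem stmt_14 {σ r b : ℝ} (hσ : 0 < σ) (hr : 0 < r) (hb : b < 0)
    (hbr : b * r ∈ Ioo (-(π / 2)) 0)
    (K₁ : ℝ → ℝ)
    (hK₁ : K₁ = fun t => -(σ ^ 2 / (2 * b)) *
      ((1 - Real.sin (b * r)) / Real.cos (b * r) * Real.cos (b * t) + Real.sin (b * t)))
    (K₂ : ℝ → ℝ)
    (hK₂ : K₂ = fun t => -(σ ^ 2 / (2 * b)) *
      (2 + (Real.sin (b * t) - Real.tan (b * r) * Real.cos (b * t)) *
          (1 - 2 * Real.sin (b * r)) - Real.cos (b * t) / Real.cos (b * r))) :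
    K₂ r = K₁ r ∧
      (∀ t ∈ Ioo r (2 * r), HasDerivAt K₂ (b * K₁ (t - r)) t) ∧
      ∀ t ∈ Icc r (2 * r), K₂ t = b * (∫ s in r..t, K₁ (s - r)) + K₁ r :=
  stmt_14_general hbr K₁ hK₁ K₂ hK₂
end

section
/- Let σ > 0, r > 0 and 0 < b < π²/(2r²), and set m = √(2b) (so that m·r/2 = r·√(b/2) < π/2 and cos(r√(b/2)) ≠ 0). Define, for t ∈ [0, r], K(t) = σ²·sin(√(2b)·(r/2 − t)) / (2r·√(2b)·cos(r·√(b/2))) + σ²/(2 b r²). Then for all t ∈ (0, r), K′(t) = −b·( ∫_0^t K(u) du + ∫_0^{r−t} K(u) du ); that is, K satisfies the delay Yule–Walker equation K′(t) = −b ∫_{−r}^0 K̃(t + s) ds of the uniform-delay equation, where K̃ denotes the even extension K̃(u) = K(|u|). -/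
/-!
Write `K(t) = A sin(m(r/2 - t)) + C` with `m = √(2b)`. An antiderivative is
`(A/m) cos(m(r/2 - s)) + C s`, and since `s ↦ cos(m(r/2 - s))` is symmetric under `s ↦ r - s`,
the integrals over `[0, t]` and `[0, r - t]` contribute the same cosine term. With `m² = 2b`,
`-b` times their sum is `K′(t) + A m cos(mr/2) - b C r`, and the constants `A`, `C` of the
paper are exactly those making `A m cos(mr/2) = b C r`.
-/

open Real Set

theorem integral_sin_mul_sub_add_const {m : ℝ} (hm : m ≠ 0) (A C p s : ℝ) :
    ∫ u in (0:ℝ)..s, (A * sin (m * (p - u)) + C) =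
      A / m * (cos (m * (p - s)) - cos (m * p)) + C * s := by
  have hF : ∀ u ∈ uIcc (0:ℝ) s,
      HasDerivAt (fun u => A / m * cos (m * (p - u)) + C * u)
        (A * sin (m * (p - u)) + C) u := by
    intro u _
    have hcos := ((hasDerivAt_id u).const_sub p).const_mul m |>.cos
    refine ((hcos.const_mul (A / m)).add ((hasDerivAt_id u).const_mul C)).congr_deriv ?_
    simp only [id]
    field_simp
  rw [intervalIntegral.integral_eq_sub_of_hasDerivAt hF
    ((by fun_prop : Continuous _).intervalIntegrable _ _)]
  simp only [sub_zero, mul_zero, add_zero]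
  ring

theorem hasDerivAt_sin_mul_sub_add_const_delay {m b A C r : ℝ} (hm : m ≠ 0)
    (hmb : m ^ 2 = 2 * b) (hbal : A * m * cos (m * r / 2) = b * C * r) (t : ℝ) :
    HasDerivAt (fun u => A * sin (m * (r / 2 - u)) + C)
      (-b * ((∫ u in (0:ℝ)..t, (A * sin (m * (r / 2 - u)) + C)) +
        ∫ u in (0:ℝ)..(r - t), (A * sin (m * (r / 2 - u)) + C))) t := by
  have hsin := ((hasDerivAt_id t).const_sub (r / 2)).const_mul m |>.sin
  refine ((hsin.const_mul A).add_const C).congr_deriv ?_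
  have hsymm : cos (m * (r / 2 - (r - t))) = cos (m * (r / 2 - t)) := by
    rw [← cos_neg]; ring_nf
  rw [integral_sin_mul_sub_add_const hm, integral_sin_mul_sub_add_const hm, hsymm,
    show m * (r / 2) = m * r / 2 by ring]
  simp only [id]
  field_simp
  linear_combination (A * cos (m * r / 2) - A * cos (m * (r - 2 * t) / 2)) * hmb - m * hbal

theorem cos_mul_sqrt_half_pos {r b : ℝ} (hr : 0 < r) (hb : 0 < b)
    (hb' : b < π ^ 2 / (2 * r ^ 2)) : 0 < cos (r * sqrt (b / 2)) := by
  have hsq : (r * sqrt (b / 2)) ^ 2 < (π / 2) ^ 2 := by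
    rw [mul_pow, sq_sqrt (by positivity)]
    rw [lt_div_iff₀ (by positivity)] at hb'
    nlinarith
  have hlt : r * sqrt (b / 2) < π / 2 := lt_of_pow_lt_pow_left₀ 2 (by positivity) hsq
  exact cos_pos_of_mem_Ioo ⟨by nlinarith [pi_pos, sqrt_nonneg (b / 2)], hlt⟩

theorem stmt_16_general {σ r b : ℝ} (hr : 0 < r)
    (hb : 0 < b) (hb' : b < π ^ 2 / (2 * r ^ 2))
    (K : ℝ → ℝ)
    (hK : K = fun t =>
      σ ^ 2 * Real.sin (Real.sqrt (2 * b) * (r / 2 - t)) /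
        (2 * r * Real.sqrt (2 * b) * Real.cos (r * Real.sqrt (b / 2))) +
      σ ^ 2 / (2 * b * r ^ 2)) :
    ∀ t ∈ Ioo 0 r,
      HasDerivAt K
        (-b * ((∫ u in (0:ℝ)..t, K u) + ∫ u in (0:ℝ)..(r - t), K u)) t := by
  intro t _
  set m := sqrt (2 * b)
  have hm : 0 < m := sqrt_pos.mpr (by positivity)
  have hmb : m ^ 2 = 2 * b := sq_sqrt (by positivity)
  have hhalf : r * sqrt (b / 2) = m * r / 2 := by
    rw [show b / 2 = (m / 2) ^ 2 by rw [div_pow, hmb]; ring, sqrt_sq (by positivity)]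
    ring
  have hc := cos_mul_sqrt_half_pos hr hb hb'
  rw [hhalf] at hc hK
  set A := σ ^ 2 / (2 * r * m * cos (m * r / 2))
  set C := σ ^ 2 / (2 * b * r ^ 2)
  have hKsin : K = fun u => A * sin (m * (r / 2 - u)) + C := by
    rw [hK]; ext u; rw [mul_div_right_comm]
  have hbal : A * m * cos (m * r / 2) = b * C * r := by
    have hc' : cos (m * r / 2) ≠ 0 := hc.ne'
    simp only [A, C]
    generalize cos (m * r / 2) = c at hc' ⊢
    field_simp
  rw [hKsin]
  exact hasDerivAt_sin_mul_sub_add_const_delay hm.ne' hmb hbal t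

/-- For the uniform-delay equation
`dX(t) = −b(∫_{−r}^0 X(t+s) ds) dt + σ dW(t)` with `0 < b < π²/(2r²)`, the function
`K(t) = σ² sin(√(2b)(r/2 − t))/(2r√(2b) cos(r√(b/2))) + σ²/(2br²)` satisfies on
`(0, r)` the delay Yule–Walker equation
`K′(t) = −b(∫_0^t K(u) du + ∫_0^{r−t} K(u) du)`, i.e.
`K′(t) = −b ∫_{−r}^0 K̃(t+s) ds` with `K̃` the even extension of `K`. -/
theorem stmt_16 {σ r b : ℝ} (hσ : 0 < σ) (hr : 0 < r)
    (hb : 0 < b) (hb' : b < π ^ 2 / (2 * r ^ 2))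
    (K : ℝ → ℝ)
    (hK : K = fun t =>
      σ ^ 2 * Real.sin (Real.sqrt (2 * b) * (r / 2 - t)) /
        (2 * r * Real.sqrt (2 * b) * Real.cos (r * Real.sqrt (b / 2))) +
      σ ^ 2 / (2 * b * r ^ 2)) :
    ∀ t ∈ Ioo 0 r,
      HasDerivAt K
        (-b * ((∫ u in (0:ℝ)..t, K u) + ∫ u in (0:ℝ)..(r - t), K u)) t :=
  stmt_16_general hr hb hb' K hK
end
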